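/- If X is a random variable with E X = 0, Var(X) = 1, density p, and D(X) < 1, then P(|X| ≥ 2√(log(1/D(X)))) ≤ 2 D(X)/log(1/D(X)). -/

import Mathlib

/-!
With `h = x² / 4` on the tail `{|x| ≥ T}` and `h = 0` elsewhere, the Donsker–Varadhan inequality
`∫ p h ≤ D(p) - 1 + ∫ φ eʰ` gives `∫_{|x| ≥ T} x² p ≤ 4 D(p) + 16 / (√(2π) T) · e^{-T²/4}`, the
last term coming from the Gaussian tail `∫_{|x| ≥ T} e^{-x²/4} ≤ 4 e^{-T²/4} / T`. For
`T = 2 √(log (1 / D))` the exponential equals `D`, so the tail second moment is at most `8 D`,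
and Chebyshev's inequality bounds the tail mass by `8 D / T² = 2 D / log (1 / D)`. When
`log (1 / D) ≤ 2 / 3` the right-hand side is at least `1` and there is nothing to prove.
-/

open Real MeasureTheory Set

noncomputable def stdGaussianDensity (t : ℝ) : ℝ :=
  (Real.sqrt (2 * Real.pi))⁻¹ * Real.exp (-t ^ 2 / 2)

/-- Entropic distance (relative entropy) of a density `p` to the standard normal. -/
noncomputable def entDist (p : ℝ → ℝ) : ℝ :=
  ∫ x, p x * Real.log (p x / stdGaussianDensity x)

open Filter Topology ProbabilityTheory

lemma sub_le_mul_log_div {t q : ℝ} (ht : 0 ≤ t) (hq : 0 < q) : t - q ≤ t * log (t / q) := by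
  have h := mul_nonneg hq.le (InformationTheory.klFun_nonneg (div_nonneg ht hq.le))
  have hexp : q * InformationTheory.klFun (t / q) = t * log (t / q) + q - t := by
    rw [InformationTheory.klFun]; field_simp
  linarith

/-- The linear form of the Donsker–Varadhan variational formula for relative entropy. -/
theorem integral_mul_le_integral_mul_log_div_add {α : Type*} [MeasurableSpace α] {μ : Measure α}
    {p q h : α → ℝ} (hp0 : ∀ x, 0 ≤ p x) (hq : ∀ x, 0 < q x) (hp : Integrable p μ)
    (hph : Integrable (fun x => p x * h x) μ)
    (hpq : Integrable (fun x => p x * log (p x / q x)) μ)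
    (hqh : Integrable (fun x => q x * exp (h x)) μ) :
    ∫ x, p x * h x ∂μ
      ≤ ∫ x, p x * log (p x / q x) ∂μ - ∫ x, p x ∂μ + ∫ x, q x * exp (h x) ∂μ := by
  have hpt : ∀ x, p x * h x ≤ p x * log (p x / q x) - p x + q x * exp (h x) := by
    intro x
    rcases (hp0 x).eq_or_lt with hpx | hpx
    · rw [← hpx]; simpa using (mul_pos (hq x) (exp_pos (h x))).le
    · have hgibbs := sub_le_mul_log_div (hp0 x) (mul_pos (hq x) (exp_pos (h x)))
      rw [← div_div, log_div (div_pos hpx (hq x)).ne' (exp_pos _).ne', log_exp] at hgibbs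
      linarith
  calc ∫ x, p x * h x ∂μ
      ≤ ∫ x, (p x * log (p x / q x) - p x + q x * exp (h x)) ∂μ :=
        integral_mono hph ((hpq.sub hp).add hqh) hpt
    _ = _ := by rw [integral_add (by exact hpq.sub hp) hqh, integral_sub hpq hp]

lemma integral_Ioi_mul_exp_neg_mul_sq {b : ℝ} (hb : 0 < b) (T : ℝ) :
    ∫ x in Ioi T, x * exp (-b * x ^ 2) = exp (-b * T ^ 2) / (2 * b) := by
  have hderiv : ∀ x ∈ Ici T, HasDerivAt (fun y => -(2 * b)⁻¹ * exp (-b * y ^ 2))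
      (x * exp (-b * x ^ 2)) x := fun x _ =>
    (((hasDerivAt_pow 2 x).const_mul (-b)).exp.const_mul _).congr_deriv (by field_simp; ring)
  have hlim : Tendsto (fun y => -(2 * b)⁻¹ * exp (-b * y ^ 2)) atTop (𝓝 0) := by
    simpa using (tendsto_exp_atBot.comp ((tendsto_pow_atTop two_ne_zero).const_mul_atTop_of_neg
      (neg_lt_zero.2 hb))).const_mul (-(2 * b)⁻¹)
  rw [integral_Ioi_of_hasDerivAt_of_tendsto' hderiv
    (integrable_mul_exp_neg_mul_sq hb).integrableOn hlim]
  ring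

lemma integral_Ioi_exp_neg_mul_sq_le {b T : ℝ} (hb : 0 < b) (hT : 0 < T) :
    ∫ x in Ioi T, exp (-b * x ^ 2) ≤ exp (-b * T ^ 2) / (2 * b * T) := by
  calc ∫ x in Ioi T, exp (-b * x ^ 2)
      ≤ ∫ x in Ioi T, x * exp (-b * x ^ 2) / T := by
        refine setIntegral_mono_on (integrable_exp_neg_mul_sq hb).integrableOn
          ((integrable_mul_exp_neg_mul_sq hb).integrableOn.div_const T) measurableSet_Ioi ?_
        intro x hx
        rw [le_div_iff₀ hT]
        exact mul_le_mul_of_nonneg_right (le_of_lt hx) (exp_pos _).le |>.trans_eq' (by ring)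
    _ = exp (-b * T ^ 2) / (2 * b * T) := by
        rw [integral_div, integral_Ioi_mul_exp_neg_mul_sq hb, div_div]

lemma abs_ge_eq_Iic_union_Ici (T : ℝ) : {x : ℝ | T ≤ |x|} = Iic (-T) ∪ Ici T := by
  ext x
  simp only [mem_ofPred_eq, mem_union, mem_Iic, mem_Ici, le_abs, le_neg]
  tauto

lemma integral_abs_ge_exp_neg_mul_sq_le {b T : ℝ} (hb : 0 < b) (hT : 0 < T) :
    ∫ x in {x | T ≤ |x|}, exp (-b * x ^ 2) ≤ exp (-b * T ^ 2) / (b * T) := by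
  have hint := (integrable_exp_neg_mul_sq hb).integrableOn (s := Iic (-T))
  have hneg : ∫ x in Iic (-T), exp (-b * x ^ 2) = ∫ x in Ioi T, exp (-b * x ^ 2) := by
    rw [← integral_comp_neg_Ioi]; simp only [neg_sq]
  rw [abs_ge_eq_Iic_union_Ici, setIntegral_union (Iic_disjoint_Ici.2 (by linarith))
    measurableSet_Ici hint (integrable_exp_neg_mul_sq hb).integrableOn, hneg,
    integral_Ici_eq_integral_Ioi]
  have := integral_Ioi_exp_neg_mul_sq_le hb hT
  calc _ ≤ exp (-b * T ^ 2) / (2 * b * T) + exp (-b * T ^ 2) / (2 * b * T) := add_le_add this this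
    _ = _ := by field_simp; ring

lemma stdGaussianDensity_eq_gaussianPDFReal : stdGaussianDensity = gaussianPDFReal 0 1 := by
  ext x; simp [stdGaussianDensity, gaussianPDFReal]

lemma stdGaussianDensity_pos (x : ℝ) : 0 < stdGaussianDensity x := by
  rw [stdGaussianDensity_eq_gaussianPDFReal]; exact gaussianPDFReal_pos 0 1 x one_ne_zero

lemma integrable_stdGaussianDensity : Integrable stdGaussianDensity := by
  rw [stdGaussianDensity_eq_gaussianPDFReal]; exact integrable_gaussianPDFReal 0 1

lemma integral_stdGaussianDensity : ∫ x, stdGaussianDensity x = 1 := by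
  rw [stdGaussianDensity_eq_gaussianPDFReal]; exact integral_gaussianPDFReal_eq_one 0 one_ne_zero

lemma stdGaussianDensity_mul_exp (x : ℝ) :
    stdGaussianDensity x * exp (x ^ 2 / 4) = (√(2 * π))⁻¹ * exp (-(1 / 4) * x ^ 2) := by
  rw [stdGaussianDensity, mul_assoc, ← exp_add]; ring_nf

lemma stdGaussianDensity_mul_exp_indicator_le (S : Set ℝ) (x : ℝ) :
    stdGaussianDensity x * exp (S.indicator (fun x => x ^ 2 / 4) x)
      ≤ stdGaussianDensity x + S.indicator (fun x => (√(2 * π))⁻¹ * exp (-(1 / 4) * x ^ 2)) x := by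
  by_cases hx : x ∈ S
  · simp only [indicator_of_mem hx, stdGaussianDensity_mul_exp]
    linarith [stdGaussianDensity_pos x]
  · simp [indicator_of_notMem hx]

lemma integrable_stdGaussianDensity_add_indicator {S : Set ℝ} (hS : MeasurableSet S) :
    Integrable (fun x => stdGaussianDensity x
      + S.indicator (fun x => (√(2 * π))⁻¹ * exp (-(1 / 4) * x ^ 2)) x) :=
  integrable_stdGaussianDensity.add
    (((integrable_exp_neg_mul_sq (by norm_num)).const_mul _).indicator hS)

lemma integrable_stdGaussianDensity_mul_exp_indicator {S : Set ℝ} (hS : MeasurableSet S) :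
    Integrable (fun x => stdGaussianDensity x * exp (S.indicator (fun x => x ^ 2 / 4) x)) := by
  refine (integrable_stdGaussianDensity_add_indicator hS).mono' ?_ (.of_forall fun x => ?_)
  · have hh : Measurable (S.indicator fun x : ℝ => x ^ 2 / 4) :=
      (measurable_id.pow_const 2 |>.div_const 4).indicator hS
    rw [stdGaussianDensity_eq_gaussianPDFReal]
    fun_prop
  · rw [Real.norm_of_nonneg (mul_pos (stdGaussianDensity_pos x) (exp_pos _)).le]
    exact stdGaussianDensity_mul_exp_indicator_le S x

lemma integral_stdGaussianDensity_mul_exp_indicator_abs_ge_le {T : ℝ} (hT : 0 < T) :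
    ∫ x, stdGaussianDensity x * exp ({x | T ≤ |x|}.indicator (fun x => x ^ 2 / 4) x)
      ≤ 1 + 4 / (√(2 * π) * T) * exp (-T ^ 2 / 4) := by
  have hS : MeasurableSet {x : ℝ | T ≤ |x|} :=
    measurableSet_le measurable_const continuous_abs.measurable
  calc _ ≤ ∫ x, (stdGaussianDensity x
          + {x | T ≤ |x|}.indicator (fun x => (√(2 * π))⁻¹ * exp (-(1 / 4) * x ^ 2)) x) :=
        integral_mono (integrable_stdGaussianDensity_mul_exp_indicator hS)
          (integrable_stdGaussianDensity_add_indicator hS)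
          (stdGaussianDensity_mul_exp_indicator_le _)
    _ = 1 + (√(2 * π))⁻¹ * ∫ x in {x | T ≤ |x|}, exp (-(1 / 4) * x ^ 2) := by
        rw [integral_add integrable_stdGaussianDensity
          (((integrable_exp_neg_mul_sq (by norm_num)).const_mul _).indicator hS),
          integral_stdGaussianDensity, integral_indicator hS, integral_const_mul]
    _ ≤ 1 + (√(2 * π))⁻¹ * (exp (-(1 / 4) * T ^ 2) / (1 / 4 * T)) := by
        gcongr
        exact integral_abs_ge_exp_neg_mul_sq_le (by norm_num) hT
    _ = 1 + 4 / (√(2 * π) * T) * exp (-T ^ 2 / 4) := by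
        field_simp

theorem setIntegral_sq_mul_le_entDist {p : ℝ → ℝ} (hp0 : ∀ x, 0 ≤ p x) (hp1 : ∫ x, p x = 1)
    (hmom : Integrable (fun x => x ^ 2 * p x))
    (hD : Integrable (fun x => p x * log (p x / stdGaussianDensity x))) {T : ℝ} (hT : 0 < T) :
    ∫ x in {x | T ≤ |x|}, x ^ 2 * p x
      ≤ 4 * entDist p + 16 / (√(2 * π) * T) * exp (-T ^ 2 / 4) := by
  set S := {x : ℝ | T ≤ |x|}
  have hS : MeasurableSet S := measurableSet_le measurable_const continuous_abs.measurable
  have hp : Integrable p := .of_integral_ne_zero (by simp [hp1])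
  have hph : (fun x => p x * S.indicator (fun x => x ^ 2 / 4) x)
      = S.indicator (fun x => x ^ 2 * p x / 4) := by
    ext x; by_cases hx : x ∈ S <;> simp [hx]; ring
  have hgibbs := integral_mul_le_integral_mul_log_div_add hp0 stdGaussianDensity_pos hp
    (hph ▸ (hmom.div_const 4).indicator hS) hD (integrable_stdGaussianDensity_mul_exp_indicator hS)
  rw [hph, integral_indicator hS, integral_div, hp1] at hgibbs
  have htilt := integral_stdGaussianDensity_mul_exp_indicator_abs_ge_le hT
  have hcoef : 16 / (√(2 * π) * T) = 4 * (4 / (√(2 * π) * T)) := by ring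
  rw [entDist, hcoef]
  linarith

lemma setIntegral_abs_ge_le_div_sq {μ : Measure ℝ} {p : ℝ → ℝ} (hp0 : ∀ x, 0 ≤ p x)
    (hp : Integrable p μ) (hmom : Integrable (fun x => x ^ 2 * p x) μ) {T : ℝ} (hT : 0 < T) :
    ∫ x in {x | T ≤ |x|}, p x ∂μ ≤ (∫ x in {x | T ≤ |x|}, x ^ 2 * p x ∂μ) / T ^ 2 := by
  rw [le_div_iff₀ (by positivity), ← integral_mul_const]
  refine setIntegral_mono_on (hp.mul_const _).integrableOn hmom.integrableOn
    (measurableSet_le measurable_const continuous_abs.measurable) fun x hx => ?_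
  have hx2 : T ^ 2 ≤ x ^ 2 := by
    rw [← sq_abs x]; exact pow_le_pow_left₀ hT.le hx 2
  nlinarith [hp0 x]

theorem stmt_12_general (p : ℝ → ℝ) (hp0 : ∀ x, 0 ≤ p x)
    (hp1 : ∫ x, p x = 1)
    (hmom : Integrable (fun x => x ^ 2 * p x))
    (hD : Integrable (fun x => p x * Real.log (p x / stdGaussianDensity x)))
    (hDpos : 0 < entDist p) (hD1 : entDist p < 1) :
    ∫ x in {x : ℝ | 2 * Real.sqrt (Real.log (1 / entDist p)) ≤ |x|}, p x
      ≤ 2 * entDist p / Real.log (1 / entDist p) := by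
  have hp : Integrable p := .of_integral_ne_zero (by simp [hp1])
  set D := entDist p
  set L := log (1 / D)
  have hL : 0 < L := log_pos ((one_lt_div hDpos).2 hD1)
  have hDL : D = exp (-L) := by simp only [L, one_div, log_inv, neg_neg, exp_log hDpos]
  set T := 2 * √L
  have hT : 0 < T := by positivity
  have hT2 : T ^ 2 = 4 * L := by rw [mul_pow, sq_sqrt hL.le]; norm_num
  rcases le_or_gt L (2 / 3) with hL_le | hL_gt
  · calc ∫ x in {x | T ≤ |x|}, p x ≤ ∫ x, p x := setIntegral_le_integral hp (.of_forall hp0)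
      _ = 1 := hp1
      _ ≤ 2 * D / L := by
          rw [one_le_div hL, hDL]; linarith [add_one_le_exp (-L)]
  · have hcoef : 16 / (√(2 * π) * T) ≤ 4 := by
      rw [div_le_iff₀ (by positivity)]
      have h2 : 2 ≤ √(2 * π) * √L := by
        rw [← sqrt_mul (by positivity), le_sqrt' two_pos]; nlinarith [pi_gt_three]
      linarith
    have htail := setIntegral_sq_mul_le_entDist hp0 hp1 hmom hD hT
    rw [show -T ^ 2 / 4 = -L by rw [hT2]; ring, ← hDL] at htail
    calc ∫ x in {x | T ≤ |x|}, p x ≤ (∫ x in {x | T ≤ |x|}, x ^ 2 * p x) / T ^ 2 :=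
          setIntegral_abs_ge_le_div_sq hp0 hp hmom hT
      _ ≤ 8 * D / (4 * L) := by
          rw [hT2]; gcongr; nlinarith
      _ = 2 * D / L := by field_simp; ring

theorem stmt_12 (p : ℝ → ℝ) (hmeas : Measurable p) (hp0 : ∀ x, 0 ≤ p x)
    (hp1 : ∫ x, p x = 1)
    (hmean : ∫ x, x * p x = 0) (hmom : Integrable (fun x => x ^ 2 * p x))
    (hvar : ∫ x, x ^ 2 * p x = 1)
    (hD : Integrable (fun x => p x * Real.log (p x / stdGaussianDensity x)))
    (hDpos : 0 < entDist p) (hD1 : entDist p < 1) :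
    ∫ x in {x : ℝ | 2 * Real.sqrt (Real.log (1 / entDist p)) ≤ |x|}, p x
      ≤ 2 * entDist p / Real.log (1 / entDist p) :=
  stmt_12_general p hp0 hp1 hmom hD hDpos hD1
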